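/- Let A be an SLAA, w ∈ Σ^ω, and 0 ≤ i ≤ j indices such that both suffixes w[i..] and w[j..] belong to L(A). Then there exist accepting runs σ = S_0S_1… of A over w[i..] and τ = T_0T_1… of A over w[j..] that are synchronized, i.e., for every k ≥ j the set S_{k-i} ∪ T_{k-j} is a multitransition (it contains at most one transition with each source state). -/

import Mathlib

set_option maxHeartbeats 1000000

namespace SLAA

/-- Shift an infinite word: `shift u i` is the suffix `u[i..]`. -/
def shift {α : Type} (u : ℕ → α) (i : ℕ) : ℕ → α := fun k => u (k + i)

/-- LTL formulae in positive normal form over atomic propositions `AP`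
(`ev` is the eventually operator F, `alw` is the always operator G). -/
inductive LTL (AP : Type) : Type
  | tt : LTL AP
  | ff : LTL AP
  | atom (a : AP) : LTL AP
  | natom (a : AP) : LTL AP
  | or (φ ψ : LTL AP) : LTL AP
  | and (φ ψ : LTL AP) : LTL AP
  | next (φ : LTL AP) : LTL AP
  | untl (φ ψ : LTL AP) : LTL AP
  | rels (φ ψ : LTL AP) : LTL AP
  | ev (φ : LTL AP) : LTL AP
  | alw (φ : LTL AP) : LTL AP

namespace LTL
variable {AP : Type}

/-- Satisfaction of an LTL formula by an infinite word `u : ℕ → Set AP`. -/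
def Sat : (ℕ → Set AP) → LTL AP → Prop
  | _, .tt => True
  | _, .ff => False
  | u, .atom a => a ∈ u 0
  | u, .natom a => a ∉ u 0
  | u, .or φ ψ => Sat u φ ∨ Sat u ψ
  | u, .and φ ψ => Sat u φ ∧ Sat u ψ
  | u, .next φ => Sat (shift u 1) φ
  | u, .untl φ ψ => ∃ i, Sat (shift u i) ψ ∧ ∀ j < i, Sat (shift u j) φ
  | u, .rels φ ψ =>
      (∃ i, Sat (shift u i) φ ∧ ∀ j ≤ i, Sat (shift u j) ψ) ∨ ∀ i, Sat (shift u i) ψ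
  | u, .ev φ => ∃ i, Sat (shift u i) φ
  | u, .alw φ => ∀ i, Sat (shift u i) φ

/-- The set of atomic propositions occurring in a formula. -/
def apSet : LTL AP → Set AP
  | .tt | .ff => ∅
  | .atom a | .natom a => {a}
  | .or φ ψ | .and φ ψ | .untl φ ψ | .rels φ ψ => φ.apSet ∪ ψ.apSet
  | .next φ | .ev φ | .alw φ => φ.apSet

/-- The size of a formula (number of its subformula occurrences). -/
def size : LTL AP → ℕ
  | .tt | .ff | .atom _ | .natom _ => 1
  | .or φ ψ | .and φ ψ | .untl φ ψ | .rels φ ψ => φ.size + ψ.size + 1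
  | .next φ | .ev φ | .alw φ => φ.size + 1

/-- The list of subformulae of a formula (with multiplicities). -/
def subs : LTL AP → List (LTL AP)
  | .tt => [.tt]
  | .ff => [.ff]
  | .atom a => [.atom a]
  | .natom a => [.natom a]
  | .or φ ψ => .or φ ψ :: (φ.subs ++ ψ.subs)
  | .and φ ψ => .and φ ψ :: (φ.subs ++ ψ.subs)
  | .next φ => .next φ :: φ.subs
  | .untl φ ψ => .untl φ ψ :: (φ.subs ++ ψ.subs)
  | .rels φ ψ => .rels φ ψ :: (φ.subs ++ ψ.subs)
  | .ev φ => .ev φ :: φ.subs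
  | .alw φ => .alw φ :: φ.subs

/-- The set of subformulae of a formula. -/
def subsSet (φ : LTL AP) : Set (LTL AP) := {ψ | ψ ∈ φ.subs}

/-- A temporal formula: the topmost operator is neither `∧` nor `∨`. -/
def IsTemporal : LTL AP → Prop
  | .or _ _ => False
  | .and _ _ => False
  | _ => True

/-- A state formula: no temporal operator occurs in it. -/
def IsState : LTL AP → Prop
  | .tt | .ff | .atom _ | .natom _ => True
  | .or φ ψ | .and φ ψ => φ.IsState ∧ ψ.IsState
  | .next _ | .untl _ _ | .rels _ _ | .ev _ | .alw _ => False

/-- Test whether a formula is an `U`-formula. -/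
def isU : LTL AP → Bool
  | .untl _ _ => true
  | _ => false

/-- Test whether a formula is an `F`-formula. -/
def isEv : LTL AP → Bool
  | .ev _ => true
  | _ => false

/-- The disjunctive decomposition `ψ̄` of a formula, as a list of disjuncts,
each disjunct being a set of (temporal) formulae whose conjunction it stands for. -/
def dnfList : LTL AP → List (Set (LTL AP))
  | .or φ ψ => φ.dnfList ++ ψ.dnfList
  | .and φ ψ => φ.dnfList.flatMap (fun K₁ => ψ.dnfList.map (fun K₂ => K₁ ∪ K₂))
  | χ => [{χ}]

/-- The top-level conjuncts of a formula. -/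
def conjuncts : LTL AP → Set (LTL AP)
  | .and φ ψ => φ.conjuncts ∪ ψ.conjuncts
  | χ => {χ}

/-- The language of an LTL formula: all words over the alphabet `2^{AP(φ)}`
satisfying `φ`. -/
def Lang (φ : LTL AP) : Set (ℕ → Set AP) :=
  {u | (∀ i, u i ⊆ φ.apSet) ∧ φ.Sat u}

end LTL

/-- A transition of an alternating automaton: a source state, a letter,
a set of acceptance marks, and a destination configuration. -/
structure Trans (St Λ Mk : Type) where
  src : St
  lab : Λ
  marks : Set Mk
  dest : Set St

/-- Acceptance formulae: positive boolean combinations of `Fin m` and `Inf m`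
terms (with boolean constants). -/
inductive AccFormula (Mk : Type) : Type
  | tt : AccFormula Mk
  | ff : AccFormula Mk
  | fin (m : Mk) : AccFormula Mk
  | inf (m : Mk) : AccFormula Mk
  | and (φ ψ : AccFormula Mk) : AccFormula Mk
  | or (φ ψ : AccFormula Mk) : AccFormula Mk

namespace AccFormula
variable {Mk : Type}

/-- Satisfaction of an acceptance formula, given the set `I` of marks that
occur infinitely often. -/
def Sat (I : Set Mk) : AccFormula Mk → Prop
  | .tt => True
  | .ff => False
  | .fin m => m ∉ I
  | .inf m => m ∈ I
  | .and φ ψ => Sat I φ ∧ Sat I ψ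
  | .or φ ψ => Sat I φ ∨ Sat I ψ

/-- Marks occurring in `Fin` terms. -/
def finMarkSet : AccFormula Mk → Set Mk
  | .fin m => {m}
  | .and φ ψ | .or φ ψ => φ.finMarkSet ∪ ψ.finMarkSet
  | _ => ∅

/-- Marks occurring in `Inf` terms. -/
def infMarkSet : AccFormula Mk → Set Mk
  | .inf m => {m}
  | .and φ ψ | .or φ ψ => φ.infMarkSet ∪ ψ.infMarkSet
  | _ => ∅

/-- An acceptance formula is Inf-less if it contains no `Inf` terms. -/
def InfLess (Φ : AccFormula Mk) : Prop := Φ.infMarkSet = ∅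

end AccFormula

/-- A `Fin`/`Inf` term of an acceptance formula. -/
inductive AccTerm (Mk : Type) : Type
  | fin (m : Mk) : AccTerm Mk
  | inf (m : Mk) : AccTerm Mk

namespace AccFormula
variable {Mk : Type}

/-- The set of terms of an acceptance formula. -/
def terms : AccFormula Mk → Set (AccTerm Mk)
  | .fin m => {.fin m}
  | .inf m => {.inf m}
  | .and φ ψ | .or φ ψ => φ.terms ∪ ψ.terms
  | _ => ∅

/-- Evaluation of an acceptance formula where exactly the terms in `O` are true. -/
def evalTerms (O : Set (AccTerm Mk)) : AccFormula Mk → Prop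
  | .tt => True
  | .ff => False
  | .fin m => AccTerm.fin m ∈ O
  | .inf m => AccTerm.inf m ∈ O
  | .and φ ψ => evalTerms O φ ∧ evalTerms O ψ
  | .or φ ψ => evalTerms O φ ∨ evalTerms O ψ

/-- Minimal models of an acceptance formula: subsets of its terms satisfying it,
no proper subset of which satisfies it. -/
def MinModels (Φ : AccFormula Mk) : Set (Set (AccTerm Mk)) :=
  {O | O ⊆ Φ.terms ∧ Φ.evalTerms O ∧ ∀ O' ⊂ O, ¬ Φ.evalTerms O'}

end AccFormula

/-- `Fin`-marks of a model. -/
def finOf {Mk : Type} (O : Set (AccTerm Mk)) : Set Mk := {m | AccTerm.fin m ∈ O}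

/-- `Inf`-marks of a model. -/
def infOf {Mk : Type} (O : Set (AccTerm Mk)) : Set Mk := {m | AccTerm.inf m ∈ O}

/-- An alternating automaton with transition-based Emerson-Lei acceptance. -/
structure AltAutomaton (St Λ Mk : Type) where
  states : Set St
  alphabet : Set Λ
  marks : Set Mk
  delta : Set (Trans St Λ Mk)
  init : St
  acc : AccFormula Mk

variable {St Λ Mk : Type}

/-- Well-formedness of an alternating automaton: finiteness of the state set,
alphabet and mark set, and typing of the transition relation and acceptance
formula. -/
def AltAutomaton.WellFormed (A : AltAutomaton St Λ Mk) : Prop :=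
  A.states.Finite ∧ A.alphabet.Finite ∧ A.marks.Finite ∧ A.init ∈ A.states ∧
  (∀ t ∈ A.delta, t.src ∈ A.states ∧ t.lab ∈ A.alphabet ∧
      t.marks ⊆ A.marks ∧ t.dest ⊆ A.states) ∧
  A.acc.finMarkSet ∪ A.acc.infMarkSet ⊆ A.marks

/-- A self-loop alternating automaton: some partial order puts every
destination state of a transition below its source. -/
def AltAutomaton.IsSLAA (A : AltAutomaton St Λ Mk) : Prop :=
  ∃ le : St → St → Prop, IsPartialOrder St le ∧
    ∀ t ∈ A.delta, ∀ s ∈ t.dest, le s t.src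

/-- `T` is a multitransition under the letter `α`. -/
def IsMulti (T : Set (Trans St Λ Mk)) (α : Λ) : Prop :=
  (∀ t ∈ T, t.lab = α) ∧
  ∀ t₁ ∈ T, ∀ t₂ ∈ T, t₁.src = t₂.src → t₁ = t₂

/-- Source configuration of a multitransition. -/
def mdom (T : Set (Trans St Λ Mk)) : Set St := {s | ∃ t ∈ T, t.src = s}

/-- Destination configuration of a multitransition. -/
def mrange (T : Set (Trans St Λ Mk)) : Set St := {s | ∃ t ∈ T, s ∈ t.dest}

/-- Restriction of a multitransition to transitions whose source lies in `C`. -/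
def restrict (T : Set (Trans St Λ Mk)) (C : Set St) : Set (Trans St Λ Mk) :=
  {t | t ∈ T ∧ t.src ∈ C}

/-- A transition in `T` carries the mark `m`. -/
def markedBy (T : Set (Trans St Λ Mk)) (m : Mk) : Prop := ∃ t ∈ T, m ∈ t.marks

/-- `T` is `s`-escaping: it contains a non-looping transition with source `s`. -/
def escaping (T : Set (Trans St Λ Mk)) (s : St) : Prop :=
  ∃ t ∈ T, t.src = s ∧ s ∉ t.dest

/-- `ρ` is a run of `A` over the word `u`. -/
def AltAutomaton.IsRun (A : AltAutomaton St Λ Mk) (u : ℕ → Λ)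
    (ρ : ℕ → Set (Trans St Λ Mk)) : Prop :=
  mdom (ρ 0) = {A.init} ∧
  ∀ i, ρ i ⊆ A.delta ∧ IsMulti (ρ i) (u i) ∧ mrange (ρ i) = mdom (ρ (i + 1))

/-- An infinite branch of a sequence of multitransitions: at every level `i`
it follows a transition of `ρ i`, starting at level 0. -/
def IsInfBranch (ρ : ℕ → Set (Trans St Λ Mk)) (b : ℕ → Trans St Λ Mk) : Prop :=
  ∀ i, b i ∈ ρ i ∧ (b (i + 1)).src ∈ (b i).dest

/-- The set `M(b)` of marks occurring infinitely often along a branch. -/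
def infMarks (b : ℕ → Trans St Λ Mk) : Set Mk :=
  {m | ∀ N, ∃ i, N ≤ i ∧ m ∈ (b i).marks}

/-- An accepting run: a run all of whose infinite branches satisfy the
acceptance formula. -/
def AltAutomaton.IsAccRun (A : AltAutomaton St Λ Mk) (u : ℕ → Λ)
    (ρ : ℕ → Set (Trans St Λ Mk)) : Prop :=
  A.IsRun u ρ ∧ ∀ b, IsInfBranch ρ b → A.acc.Sat (infMarks b)

/-- The language of an alternating automaton. -/
def AltAutomaton.Lang (A : AltAutomaton St Λ Mk) : Set (ℕ → Λ) :=
  {u | (∀ i, u i ∈ A.alphabet) ∧ ∃ ρ, A.IsAccRun u ρ}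

/-- Product of two sets of (marks, configuration) pairs. -/
def otimes {Mk St : Type} (P Q : Set (Set Mk × Set St)) : Set (Set Mk × Set St) :=
  {r | ∃ p ∈ P, ∃ q ∈ Q, r = (p.1 ∪ q.1, p.2 ∪ q.2)}

/-- Marks eraser. -/
def me {Mk St : Type} (P : Set (Set Mk × Set St)) : Set (Set Mk × Set St) :=
  {r | ∃ p ∈ P, r = ((∅ : Set Mk), p.2)}

/-- The transition function of the basic translation (with a single co-Büchi
mark `()`); `F ψ` is handled as `tt U ψ` and `G ψ` as `ff R ψ`. -/
def basicDelta {AP : Type} : LTL AP → Set AP → Set (Set Unit × Set (LTL AP))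
  | .tt, _ => {((∅ : Set Unit), (∅ : Set (LTL AP)))}
  | .ff, _ => ∅
  | .atom a, α => {p | p = ((∅ : Set Unit), (∅ : Set (LTL AP))) ∧ a ∈ α}
  | .natom a, α => {p | p = ((∅ : Set Unit), (∅ : Set (LTL AP))) ∧ a ∉ α}
  | .and φ ψ, α => me (otimes (basicDelta φ α) (basicDelta ψ α))
  | .or φ ψ, α => me (basicDelta φ α ∪ basicDelta ψ α)
  | .next φ, _ => {((∅ : Set Unit), ({φ} : Set (LTL AP)))}
  | .untl φ ψ, α =>
      me (basicDelta ψ α) ∪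
        otimes {(({()} : Set Unit), ({LTL.untl φ ψ} : Set (LTL AP)))} (me (basicDelta φ α))
  | .ev ψ, α =>
      me (basicDelta ψ α) ∪
        otimes {(({()} : Set Unit), ({LTL.ev ψ} : Set (LTL AP)))}
          (me {((∅ : Set Unit), (∅ : Set (LTL AP)))})
  | .rels φ ψ, α =>
      me (otimes (basicDelta φ α) (basicDelta ψ α)) ∪
        me (otimes {((∅ : Set Unit), ({LTL.rels φ ψ} : Set (LTL AP)))} (basicDelta ψ α))
  | .alw ψ, α =>
      me (otimes (∅ : Set (Set Unit × Set (LTL AP))) (basicDelta ψ α)) ∪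
        me (otimes {((∅ : Set Unit), ({LTL.alw ψ} : Set (LTL AP)))} (basicDelta ψ α))

/-- Product over a set `K` of formulae, given a transition set `d χ` for each
formula `χ`. -/
def setOtimes {AP Mk : Type} (d : LTL AP → Set (Set Mk × Set (LTL AP)))
    (K : Set (LTL AP)) : Set (Set Mk × Set (LTL AP)) :=
  {r | ∃ f : LTL AP → Set Mk × Set (LTL AP), (∀ χ ∈ K, f χ ∈ d χ) ∧
        r = (⋃ χ ∈ K, (f χ).1, ⋃ χ ∈ K, (f χ).2)}

/-- `Δ(ψ_K, α)` where `ψ_K` is the conjunction of all formulae in `K`: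
for a singleton `K = {χ}` it is `Δ(χ, α)`, otherwise the `∧`-rule erases
the marks of the product. -/
def conjDelta {AP Mk : Type} (d : LTL AP → Set (Set Mk × Set (LTL AP)))
    (K : Set (LTL AP)) : Set (Set Mk × Set (LTL AP)) :=
  {r | (∃ χ, K = {χ} ∧ r ∈ d χ) ∨ ((¬ ∃ χ, K = {χ}) ∧ r ∈ me (setOtimes d K))}

/-- Looping transitions of `ψ_K` (destination subsumes `K`), with `K` removed
from the destination. -/
def deltaL {AP Mk : Type} (d : LTL AP → Set (Set Mk × Set (LTL AP)))
    (K : Set (LTL AP)) : Set (Set Mk × Set (LTL AP)) :=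
  {r | ∃ p ∈ conjDelta d K, K ⊆ p.2 ∧ r = (p.1, p.2 \ K)}

/-- Non-looping transitions of `ψ_K`. -/
def deltaNL {AP Mk : Type} (d : LTL AP → Set (Set Mk × Set (LTL AP)))
    (K : Set (LTL AP)) : Set (Set Mk × Set (LTL AP)) :=
  {p | p ∈ conjDelta d K ∧ ¬ K ⊆ p.2}

/-- Acceptance marks of the F-merging translation: the co-Büchi mark and the
orange marks `o^K_{Fψ}`. -/
inductive FMark (AP : Type) : Type
  | base : FMark AP
  | orange (ψ : LTL AP) (K : Set (LTL AP)) : FMark AP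

/-- The set of orange marks `M_K = {o^{K'}_{Fψ} | K' ∈ ψ̄, K' ≠ K}`. -/
def fMK {AP : Type} (ψ : LTL AP) (K : Set (LTL AP)) : Set (FMark AP) :=
  {m | ∃ K', K' ∈ ψ.dnfList ∧ K' ≠ K ∧ m = FMark.orange ψ K'}

/-- The transition function of the F-merging translation. -/
def fmergeDelta {AP : Type} : LTL AP → Set AP → Set (Set (FMark AP) × Set (LTL AP))
  | .tt, _ => {((∅ : Set (FMark AP)), (∅ : Set (LTL AP)))}
  | .ff, _ => ∅
  | .atom a, α => {p | p = ((∅ : Set (FMark AP)), (∅ : Set (LTL AP))) ∧ a ∈ α}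
  | .natom a, α => {p | p = ((∅ : Set (FMark AP)), (∅ : Set (LTL AP))) ∧ a ∉ α}
  | .and φ ψ, α => me (otimes (fmergeDelta φ α) (fmergeDelta ψ α))
  | .or φ ψ, α => me (fmergeDelta φ α ∪ fmergeDelta ψ α)
  | .next φ, _ => {((∅ : Set (FMark AP)), ({φ} : Set (LTL AP)))}
  | .untl φ ψ, α =>
      me (fmergeDelta ψ α) ∪
        otimes {(({FMark.base} : Set (FMark AP)), ({LTL.untl φ ψ} : Set (LTL AP)))}
          (me (fmergeDelta φ α))
  | .rels φ ψ, α =>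
      me (otimes (fmergeDelta φ α) (fmergeDelta ψ α)) ∪
        me (otimes {((∅ : Set (FMark AP)), ({LTL.rels φ ψ} : Set (LTL AP)))} (fmergeDelta ψ α))
  | .alw ψ, α =>
      me (otimes (∅ : Set (Set (FMark AP) × Set (LTL AP))) (fmergeDelta ψ α)) ∪
        me (otimes {((∅ : Set (FMark AP)), ({LTL.alw ψ} : Set (LTL AP)))} (fmergeDelta ψ α))
  | .ev ψ, α =>
      {(({FMark.base} : Set (FMark AP)), ({LTL.ev ψ} : Set (LTL AP)))} ∪
      {r | ∃ K, K ∈ ψ.dnfList ∧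
            (r ∈ me (deltaNL (fun χ => if _h : χ.size ≤ ψ.size then fmergeDelta χ α else ∅) K) ∨
             r ∈ otimes {((fMK ψ K : Set (FMark AP)), ({LTL.ev ψ} : Set (LTL AP)))}
                   (deltaL (fun χ => if _h : χ.size ≤ ψ.size then fmergeDelta χ α else ∅) K))}
termination_by φ _ => φ.size
decreasing_by
  all_goals simp [LTL.size] at *
  all_goals omega

/-- Acceptance marks of the F,G-merging translation: `f ψ` stands for the
mark `f_ψ`, `e ψ` for the escape mark `e_ψ` and `o ψ K` for `o^K_{Fψ}`. -/
inductive FGMark (AP : Type) : Type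
  | f (ψ : LTL AP) : FGMark AP
  | e (ψ : LTL AP) : FGMark AP
  | o (ψ : LTL AP) (K : Set (LTL AP)) : FGMark AP

/-- `M_K = {o^{K'}_{Fψ} | K' ∈ ψ̄, K' ≠ K}` for the F,G-merging translation. -/
def fgMK {AP : Type} (ψ : LTL AP) (K : Set (LTL AP)) : Set (FGMark AP) :=
  {m | ∃ K', K' ∈ ψ.dnfList ∧ K' ≠ K ∧ m = FGMark.o ψ K'}

/-- A formula whose topmost operator is `U` or `F`. -/
def IsUF {AP : Type} : LTL AP → Prop
  | .untl _ _ => True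
  | .ev _ => True
  | _ => False

/-- `Δ'_L`: looping transitions of `ψ'`, with `ψ'` removed from the
destination. -/
def dPrimeL {AP Mk : Type} (d : Set (Set Mk × Set (LTL AP))) (χ : LTL AP) :
    Set (Set Mk × Set (LTL AP)) :=
  {r | ∃ p ∈ d, χ ∈ p.2 ∧ r = (p.1, p.2 \ {χ})}

/-- `Δ'_NL`: non-looping transitions of `ψ'`, marked with the escape mark. -/
def dPrimeNL {AP : Type} (d : Set (Set (FGMark AP) × Set (LTL AP))) (χ : LTL AP) :
    Set (Set (FGMark AP) × Set (LTL AP)) :=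
  {r | ∃ p ∈ d, χ ∉ p.2 ∧ r = (({FGMark.e χ} : Set (FGMark AP)), p.2)}

/-- `Δ'(ψ', α)` used in the `G`-rule of the F,G-merging translation, where
`d = Δ(ψ', α)`. -/
def deltaPrime {AP : Type} (d : Set (Set (FGMark AP) × Set (LTL AP))) (χ : LTL AP) :
    Set (Set (FGMark AP) × Set (LTL AP)) :=
  {r | (IsUF χ ∧ r ∈ dPrimeL d χ ∪ dPrimeNL d χ) ∨
       (¬ IsUF χ ∧ ∃ p ∈ d, r = (p.1, p.2 \ {χ}))}

/-- The transition function of the F,G-merging translation. -/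
def fgDelta {AP : Type} : LTL AP → Set AP → Set (Set (FGMark AP) × Set (LTL AP))
  | .tt, _ => {((∅ : Set (FGMark AP)), (∅ : Set (LTL AP)))}
  | .ff, _ => ∅
  | .atom a, α => {p | p = ((∅ : Set (FGMark AP)), (∅ : Set (LTL AP))) ∧ a ∈ α}
  | .natom a, α => {p | p = ((∅ : Set (FGMark AP)), (∅ : Set (LTL AP))) ∧ a ∉ α}
  | .and φ ψ, α => me (otimes (fgDelta φ α) (fgDelta ψ α))
  | .or φ ψ, α => me (fgDelta φ α ∪ fgDelta ψ α)
  | .next φ, _ => {((∅ : Set (FGMark AP)), ({φ} : Set (LTL AP)))}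
  | .untl φ ψ, α =>
      me (fgDelta ψ α) ∪
        otimes {(({FGMark.f (LTL.untl φ ψ)} : Set (FGMark AP)), ({LTL.untl φ ψ} : Set (LTL AP)))}
          (me (fgDelta φ α))
  | .rels φ ψ, α =>
      me (otimes (fgDelta φ α) (fgDelta ψ α)) ∪
        me (otimes {((∅ : Set (FGMark AP)), ({LTL.rels φ ψ} : Set (LTL AP)))} (fgDelta ψ α))
  | .ev ψ, α =>
      {(({FGMark.f (LTL.ev ψ)} : Set (FGMark AP)), ({LTL.ev ψ} : Set (LTL AP)))} ∪
      {r | ∃ K, K ∈ ψ.dnfList ∧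
            (r ∈ me (deltaNL (fun χ => if _h : χ.size ≤ ψ.size then fgDelta χ α else ∅) K) ∨
             r ∈ otimes {((fgMK ψ K : Set (FGMark AP)), ({LTL.ev ψ} : Set (LTL AP)))}
                   (deltaL (fun χ => if _h : χ.size ≤ ψ.size then fgDelta χ α else ∅) K))}
  | .alw ψ, α =>
      {r | ((∀ χ ∈ ψ.conjuncts, χ.IsTemporal ∨ χ.IsState) ∧
              r ∈ otimes {((∅ : Set (FGMark AP)), ({LTL.alw ψ} : Set (LTL AP)))}
                    (setOtimes
                      (fun χ => deltaPrime (if _h : χ.size ≤ ψ.size then fgDelta χ α else ∅) χ)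
                      ψ.conjuncts)) ∨
           ((¬ ∀ χ ∈ ψ.conjuncts, χ.IsTemporal ∨ χ.IsState) ∧
              r ∈ me (otimes (∅ : Set (Set (FGMark AP) × Set (LTL AP))) (fgDelta ψ α)) ∪
                  me (otimes {((∅ : Set (FGMark AP)), ({LTL.alw ψ} : Set (LTL AP)))} (fgDelta ψ α)))}
termination_by φ _ => φ.size
decreasing_by
  all_goals simp [LTL.size] at *
  all_goals omega

/-- Big disjunction of a list of acceptance formulae. -/
def bigAndAcc {Mk : Type} (l : List (AccFormula Mk)) : AccFormula Mk :=
  l.foldr AccFormula.and AccFormula.tt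

def bigOrAcc {Mk : Type} (l : List (AccFormula Mk)) : AccFormula Mk :=
  l.foldr AccFormula.or AccFormula.ff

/-- The co-Büchi SLAA produced by the basic translation of `φ`. -/
def basicSLAA {AP : Type} (φ : LTL AP) : AltAutomaton (LTL AP) (Set AP) Unit where
  states := φ.subsSet
  alphabet := {α | α ⊆ φ.apSet}
  marks := {()}
  delta := {t | t.src ∈ φ.subsSet ∧ t.lab ⊆ φ.apSet ∧ (t.marks, t.dest) ∈ basicDelta t.src t.lab}
  init := φ
  acc := AccFormula.fin ()

/-- The acceptance formula of the F-merging translation: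
`Fin m ∧ ⋀_{Fψ} ⋁_{K ∈ ψ̄} Fin o^K_{Fψ}`. -/
def fmergeAcc {AP : Type} (φ : LTL AP) : AccFormula (FMark AP) :=
  AccFormula.and (AccFormula.fin FMark.base)
    (bigAndAcc ((φ.subs.filter LTL.isEv).map (fun χ =>
      match χ with
      | LTL.ev ψ => bigOrAcc (ψ.dnfList.map (fun K => AccFormula.fin (FMark.orange ψ K)))
      | _ => AccFormula.tt)))

/-- The Inf-less SLAA produced by the F-merging translation of `φ`. -/
def fmergeSLAA {AP : Type} (φ : LTL AP) : AltAutomaton (LTL AP) (Set AP) (FMark AP) where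
  states := φ.subsSet
  alphabet := {α | α ⊆ φ.apSet}
  marks := {FMark.base} ∪
    {m | ∃ ψ, LTL.ev ψ ∈ φ.subsSet ∧ ∃ K, K ∈ ψ.dnfList ∧ m = FMark.orange ψ K}
  delta := {t | t.src ∈ φ.subsSet ∧ t.lab ⊆ φ.apSet ∧ (t.marks, t.dest) ∈ fmergeDelta t.src t.lab}
  init := φ
  acc := fmergeAcc φ

/-- The acceptance formula of the F,G-merging translation:
`⋀_{ψ ∈ U_φ} (Fin f_ψ ∨ Inf e_ψ) ∧
 ⋀_{Fψ ∈ F_φ} ((Fin f_{Fψ} ∧ ⋁_{K ∈ ψ̄} Fin o^K_{Fψ}) ∨ Inf e_{Fψ})`. -/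
def fgAcc {AP : Type} (φ : LTL AP) : AccFormula (FGMark AP) :=
  AccFormula.and
    (bigAndAcc ((φ.subs.filter LTL.isU).map (fun ψ =>
      AccFormula.or (AccFormula.fin (FGMark.f ψ)) (AccFormula.inf (FGMark.e ψ)))))
    (bigAndAcc ((φ.subs.filter LTL.isEv).map (fun χ =>
      match χ with
      | LTL.ev ψ =>
          AccFormula.or
            (AccFormula.and (AccFormula.fin (FGMark.f (LTL.ev ψ)))
              (bigOrAcc (ψ.dnfList.map (fun K => AccFormula.fin (FGMark.o ψ K)))))
            (AccFormula.inf (FGMark.e (LTL.ev ψ)))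
      | _ => AccFormula.tt)))

/-- The set of acceptance marks of the F,G-merging translation. -/
def fgMarks {AP : Type} (φ : LTL AP) : Set (FGMark AP) :=
  {m | ∃ ψ₁ ψ₂, LTL.untl ψ₁ ψ₂ ∈ φ.subsSet ∧
        (m = FGMark.f (LTL.untl ψ₁ ψ₂) ∨ m = FGMark.e (LTL.untl ψ₁ ψ₂))} ∪
  {m | ∃ ψ, LTL.ev ψ ∈ φ.subsSet ∧
        (m = FGMark.f (LTL.ev ψ) ∨ m = FGMark.e (LTL.ev ψ) ∨
         ∃ K, K ∈ ψ.dnfList ∧ m = FGMark.o ψ K)}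

/-- The SLAA produced by the F,G-merging translation of `φ`. -/
def fgSLAA {AP : Type} (φ : LTL AP) : AltAutomaton (LTL AP) (Set AP) (FGMark AP) where
  states := φ.subsSet
  alphabet := {α | α ⊆ φ.apSet}
  marks := fgMarks φ
  delta := {t | t.src ∈ φ.subsSet ∧ t.lab ⊆ φ.apSet ∧ (t.marks, t.dest) ∈ fgDelta t.src t.lab}
  init := φ
  acc := fgAcc φ

/-- Big syntactic disjunction / conjunction of lists of LTL formulae. -/
def bigOrL {AP : Type} (l : List (LTL AP)) : LTL AP := l.foldr LTL.or LTL.ff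

def bigAndL {AP : Type} (l : List (LTL AP)) : LTL AP := l.foldr LTL.and LTL.tt

/-- `l` is a list enumerating exactly the elements of the set `S`. -/
def ListEnum {α : Type} (l : List α) (S : Set α) : Prop := ∀ x, x ∈ l ↔ x ∈ S

/-- `ψ` is a syntactic disjunction (resp. conjunction) of an enumeration of `G`. -/
def EnumOr {AP : Type} (G : Set (LTL AP)) (ψ : LTL AP) : Prop :=
  ∃ l, ListEnum l G ∧ ψ = bigOrL l

def EnumAnd {AP : Type} (G : Set (LTL AP)) (ψ : LTL AP) : Prop :=
  ∃ l, ListEnum l G ∧ ψ = bigAndL l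

/-- `ψ` is the formula `φ_α = ⋀_{a ∈ α} a ∧ ⋀_{a ∈ AP' ∖ α} ¬a`. -/
def LetterForm {AP : Type} (AP' α : Set AP) (ψ : LTL AP) : Prop :=
  EnumAnd ({χ | ∃ a ∈ α, χ = LTL.atom a} ∪ {χ | ∃ a ∈ AP' \ α, χ = LTL.natom a}) ψ

section SLAAtoLTL

variable {AP St Mk : Type}

/-- `χ` is the component formula `φ_α ∧ X φ(C ∖ {s})` of a looping transition `t`. -/
def CompLoop (AP' : Set AP) (F : St → LTL AP) (t : Trans St (Set AP) Mk)
    (χ : LTL AP) : Prop :=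
  ∃ ℓ ξ, LetterForm AP' t.lab ℓ ∧ EnumAnd (F '' (t.dest \ {t.src})) ξ ∧
    χ = LTL.and ℓ (LTL.next ξ)

/-- `χ` is the component formula `φ_α ∧ X φ(C)` of a non-looping transition `t`. -/
def CompNonLoop (AP' : Set AP) (F : St → LTL AP) (t : Trans St (Set AP) Mk)
    (χ : LTL AP) : Prop :=
  ∃ ℓ ξ, LetterForm AP' t.lab ℓ ∧ EnumAnd (F '' t.dest) ξ ∧
    χ = LTL.and ℓ (LTL.next ξ)

/-- Looping transitions of `A` from `s`. -/
def loopTrans {Λ' Mk' : Type} (A : AltAutomaton St Λ' Mk') (s : St) : Set (Trans St Λ' Mk') :=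
  {t | t ∈ A.delta ∧ t.src = s ∧ s ∈ t.dest}

/-- Non-looping transitions of `A` from `s`. -/
def nonloopTrans {Λ' Mk' : Type} (A : AltAutomaton St Λ' Mk') (s : St) : Set (Trans St Λ' Mk') :=
  {t | t ∈ A.delta ∧ t.src = s ∧ s ∉ t.dest}

/-- `ψ₁` is the formula
`(⋁_{loops} φ_α ∧ X φ(C∖{s})) U (⋁_{non-loops} φ_α ∧ X φ(C))`. -/
def Phi1Spec (AP' : Set AP) (A : AltAutomaton St (Set AP) Mk) (F : St → LTL AP)
    (s : St) (ψ₁ : LTL AP) : Prop :=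
  ∃ l₁ l₂ c₁ c₂, ListEnum l₁ (loopTrans A s) ∧ ListEnum l₂ (nonloopTrans A s) ∧
    List.Forall₂ (CompLoop AP' F) l₁ c₁ ∧ List.Forall₂ (CompNonLoop AP' F) l₂ c₂ ∧
    ψ₁ = LTL.untl (bigOrL c₁) (bigOrL c₂)

/-- `ψ₂` is the formula `G ⋁_{loops} φ_α ∧ X φ(C∖{s})`. -/
def Phi2Spec (AP' : Set AP) (A : AltAutomaton St (Set AP) Mk) (F : St → LTL AP)
    (s : St) (ψ₂ : LTL AP) : Prop :=
  ∃ l c, ListEnum l (loopTrans A s) ∧ List.Forall₂ (CompLoop AP' F) l c ∧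
    ψ₂ = LTL.alw (bigOrL c)

/-- `ξ` is the conjunct `GF ⋁_{loops marked by m} φ_α ∧ X φ(C∖{s})`. -/
def GFSpec (AP' : Set AP) (A : AltAutomaton St (Set AP) Mk) (F : St → LTL AP)
    (s : St) (m : Mk) (ξ : LTL AP) : Prop :=
  ∃ l c, ListEnum l {t | t ∈ loopTrans A s ∧ m ∈ t.marks} ∧
    List.Forall₂ (CompLoop AP' F) l c ∧ ξ = LTL.alw (LTL.ev (bigOrL c))

/-- `ξ` is the conjunct `FG ⋁_{loops not marked by m} φ_α ∧ X φ(C∖{s})`. -/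
def FGSpec (AP' : Set AP) (A : AltAutomaton St (Set AP) Mk) (F : St → LTL AP)
    (s : St) (m : Mk) (ξ : LTL AP) : Prop :=
  ∃ l c, ListEnum l {t | t ∈ loopTrans A s ∧ m ∉ t.marks} ∧
    List.Forall₂ (CompLoop AP' F) l c ∧ ξ = LTL.ev (LTL.alw (bigOrL c))

/-- `χ` is the disjunct of `φ₃(s)` corresponding to the minimal model `O`. -/
def ModelSpec (AP' : Set AP) (A : AltAutomaton St (Set AP) Mk) (F : St → LTL AP)
    (s : St) (O : Set (AccTerm Mk)) (χ : LTL AP) : Prop :=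
  ∃ linf lfin cinf cfin, ListEnum linf (infOf O) ∧ ListEnum lfin (finOf O) ∧
    List.Forall₂ (GFSpec AP' A F s) linf cinf ∧
    List.Forall₂ (FGSpec AP' A F s) lfin cfin ∧
    χ = LTL.and (bigAndL cinf) (bigAndL cfin)

/-- `ψ₃` is the disjunction over all minimal models of the acceptance formula. -/
def Phi3Spec (AP' : Set AP) (A : AltAutomaton St (Set AP) Mk) (F : St → LTL AP)
    (s : St) (ψ₃ : LTL AP) : Prop :=
  ∃ lm c, ListEnum lm A.acc.MinModels ∧
    List.Forall₂ (ModelSpec AP' A F s) lm c ∧ ψ₃ = bigOrL c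

/-- `F` is a result of the inductive SLAA-to-LTL translation: for every state
`s`, `F s = φ₁(s) ∨ (φ₂(s) ∧ φ₃(s))` as constructed from the transitions of
`A` and the minimal models of its acceptance formula. -/
def IsTranslation (AP' : Set AP) (A : AltAutomaton St (Set AP) Mk)
    (F : St → LTL AP) : Prop :=
  ∀ s ∈ A.states, ∃ ψ₁ ψ₂ ψ₃,
    Phi1Spec AP' A F s ψ₁ ∧ Phi2Spec AP' A F s ψ₂ ∧ Phi3Spec AP' A F s ψ₃ ∧
    F s = LTL.or ψ₁ (LTL.and ψ₂ ψ₃)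

end SLAAtoLTL

/-! Given accepting runs `σ` over `w[i..]` and `ρ` over `w[j..]`, build a new run over
`w[j..]` in which each state takes its transition from `σ` (read at the same absolute
position) whenever `σ` has one from it, and from `ρ` otherwise; it is synchronized with `σ`
by construction. A branch of the new run that ever enters `σ` stays in `σ`, since the
configurations of `σ` are closed under successors; prefixing it with a path of `σ` from its
initial state yields a branch of `σ` with the same marks occurring infinitely often, so it
is accepting. Branches that never enter `σ` are branches of `ρ`. -/

lemma shift_shift {α : Type} (u : ℕ → α) (a b : ℕ) : shift (shift u a) b = shift u (b + a) :=
  funext fun k => congrArg u (Nat.add_assoc k b a)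

def IsBranchFrom (ρ : ℕ → Set (Trans St Λ Mk)) (k₀ : ℕ) (b : ℕ → Trans St Λ Mk) : Prop :=
  ∀ k, k₀ ≤ k → b k ∈ ρ k ∧ (b (k + 1)).src ∈ (b k).dest

/-- A run without initial condition, in which branches starting at any level are accepting. -/
def AltAutomaton.IsAccSuffixRun (A : AltAutomaton St Λ Mk) (u : ℕ → Λ)
    (σ : ℕ → Set (Trans St Λ Mk)) : Prop :=
  (∀ k, σ k ⊆ A.delta ∧ IsMulti (σ k) (u k) ∧ mrange (σ k) ⊆ mdom (σ (k + 1))) ∧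
  ∀ k₀ b, IsBranchFrom σ k₀ b → A.acc.Sat (infMarks b)

section Branches

variable {σ : ℕ → Set (Trans St Λ Mk)} {b : ℕ → Trans St Λ Mk}

lemma infMarks_eq_of_forall_ge_eq {b' : ℕ → Trans St Λ Mk} {N : ℕ}
    (h : ∀ n, N ≤ n → b n = b' n) : infMarks b = infMarks b' := by
  ext m
  simp only [infMarks, Set.mem_ofPred_eq]
  constructor
  · intro hm M
    obtain ⟨n, hn, hmn⟩ := hm (max M N)
    exact ⟨n, le_of_max_le_left hn, h n (le_of_max_le_right hn) ▸ hmn⟩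
  · intro hm M
    obtain ⟨n, hn, hmn⟩ := hm (max M N)
    exact ⟨n, le_of_max_le_left hn, (h n (le_of_max_le_right hn)).symm ▸ hmn⟩

lemma infMarks_comp_sub (b : ℕ → Trans St Λ Mk) (D : ℕ) :
    infMarks (fun n => b (n - D)) = infMarks b := by
  ext m
  simp only [infMarks, Set.mem_ofPred_eq]
  constructor
  · intro hm N
    obtain ⟨n, hn, hmn⟩ := hm (N + D)
    exact ⟨n - D, by omega, hmn⟩
  · intro hm N
    obtain ⟨n, hn, hmn⟩ := hm N
    exact ⟨n + D, by omega, by rwa [Nat.add_sub_cancel]⟩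

lemma IsBranchFrom.comp_sub {D k₀ : ℕ} (hb : IsBranchFrom (fun k => σ (k + D)) k₀ b) :
    IsBranchFrom σ (k₀ + D) (fun n => b (n - D)) := by
  intro k hk
  obtain ⟨hmem, hsrc⟩ : b (k - D) ∈ σ (k - D + D) ∧ (b (k - D + 1)).src ∈ (b (k - D)).dest :=
    hb (k - D) (by omega)
  rw [Nat.sub_add_cancel (by omega : D ≤ k)] at hmem
  show b (k - D) ∈ σ k ∧ (b (k + 1 - D)).src ∈ (b (k - D)).dest
  rw [Nat.sub_add_comm (by omega : D ≤ k)]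
  exact ⟨hmem, hsrc⟩

/-- Extend backwards one level at a time: `mdom (σ (L + 1)) = mrange (σ L)` provides a
transition at level `L` leading to the current source. -/
lemma AltAutomaton.IsRun.exists_isInfBranch_of_isBranchFrom {A : AltAutomaton St Λ Mk}
    {u : ℕ → Λ} (hσ : A.IsRun u σ) {L : ℕ} (hb : IsBranchFrom σ L b) :
    ∃ b', IsInfBranch σ b' ∧ ∀ n, L ≤ n → b' n = b n := by
  induction L generalizing b with
  | zero => exact ⟨b, fun k => hb k k.zero_le, fun _ _ => rfl⟩
  | succ L ih =>
    obtain ⟨t, ht, hsrc⟩ : (b (L + 1)).src ∈ mrange (σ L) :=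
      (hσ.2 L).2.2 ▸ ⟨b (L + 1), (hb (L + 1) le_rfl).1, rfl⟩
    have hb' : IsBranchFrom σ L (Function.update b L t) := by
      intro k hk
      rcases hk.eq_or_lt with rfl | hk
      · simpa using ⟨ht, hsrc⟩
      · simpa [hk.ne', (Nat.lt_succ_of_lt hk).ne'] using hb k hk
    obtain ⟨b', hbr, heq⟩ := ih hb'
    refine ⟨b', hbr, fun n hn => ?_⟩
    rw [heq n (by omega), Function.update_of_ne (by omega)]

lemma AltAutomaton.IsAccRun.sat_of_isBranchFrom {A : AltAutomaton St Λ Mk} {u : ℕ → Λ}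
    (hσ : A.IsAccRun u σ) {L : ℕ} (hb : IsBranchFrom σ L b) : A.acc.Sat (infMarks b) := by
  obtain ⟨b', hbr, heq⟩ := hσ.1.exists_isInfBranch_of_isBranchFrom hb
  rw [← infMarks_eq_of_forall_ge_eq heq]
  exact hσ.2 b' hbr

lemma AltAutomaton.IsAccRun.drop {A : AltAutomaton St Λ Mk} {u : ℕ → Λ}
    (hσ : A.IsAccRun u σ) (D : ℕ) : A.IsAccSuffixRun (shift u D) (fun k => σ (k + D)) := by
  refine ⟨fun k => ⟨(hσ.1.2 _).1, (hσ.1.2 _).2.1, ?_⟩, fun k₀ b hb => ?_⟩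
  · show mrange (σ (k + D)) ⊆ mdom (σ (k + 1 + D))
    rw [Nat.add_right_comm]
    exact (hσ.1.2 (k + D)).2.2.le
  · rw [← infMarks_comp_sub b D]
    exact hσ.sat_of_isBranchFrom hb.comp_sub

end Branches

section Merge

variable {σ ρ : ℕ → Set (Trans St Λ Mk)} {s : St} {k : ℕ} {t : Trans St Λ Mk}

variable (σ ρ) in
def mergeStep (k : ℕ) (C : Set St) : Set (Trans St Λ Mk) :=
  {t | t.src ∈ C ∧ (t ∈ σ k ∨ (t.src ∉ mdom (σ k) ∧ t ∈ ρ k))}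

variable (σ ρ) in
def merge (s : St) : ℕ → Set (Trans St Λ Mk)
  | 0 => mergeStep σ ρ 0 {s}
  | k + 1 => mergeStep σ ρ (k + 1) (mrange (merge s k))

lemma mdom_mergeStep {C : Set St} (hC : C ⊆ mdom (σ k) ∪ mdom (ρ k)) :
    mdom (mergeStep σ ρ k C) = C := by
  refine Set.Subset.antisymm (fun _ ⟨t, ht, hts⟩ => hts ▸ ht.1) fun s' hs' => ?_
  by_cases hσs : s' ∈ mdom (σ k)
  · obtain ⟨t, ht, rfl⟩ := hσs
    exact ⟨t, ⟨hs', Or.inl ht⟩, rfl⟩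
  · obtain ⟨t, ht, rfl⟩ := (hC hs').resolve_left hσs
    exact ⟨t, ⟨hs', Or.inr ⟨hσs, ht⟩⟩, rfl⟩

lemma of_mem_merge (ht : t ∈ merge σ ρ s k) : t ∈ σ k ∨ (t.src ∉ mdom (σ k) ∧ t ∈ ρ k) := by
  cases k <;> exact ht.2

lemma merge_subset : merge σ ρ s k ⊆ σ k ∪ ρ k :=
  fun _ ht => (of_mem_merge ht).imp_right And.right

lemma mem_left_of_mem_merge (ht : t ∈ merge σ ρ s k) (hsrc : t.src ∈ mdom (σ k)) : t ∈ σ k :=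
  (of_mem_merge ht).resolve_right fun h => h.1 hsrc

lemma injOn_src_union_merge (hσ : Set.InjOn Trans.src (σ k)) (hρ : Set.InjOn Trans.src (ρ k)) :
    Set.InjOn Trans.src (σ k ∪ merge σ ρ s k) := by
  have hcases : ∀ t ∈ σ k ∪ merge σ ρ s k, t ∈ σ k ∨ (t.src ∉ mdom (σ k) ∧ t ∈ ρ k) :=
    fun t ht => ht.elim Or.inl of_mem_merge
  intro t₁ h₁ t₂ h₂ hsrc
  rcases hcases t₁ h₁ with h₁ | ⟨h₁σ, h₁⟩ <;> rcases hcases t₂ h₂ with h₂ | ⟨h₂σ, h₂⟩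
  · exact hσ h₁ h₂ hsrc
  · exact absurd ⟨t₁, h₁, hsrc⟩ h₂σ
  · exact absurd ⟨t₂, h₂, hsrc.symm⟩ h₁σ
  · exact hρ h₁ h₂ hsrc

lemma IsInfBranch.isBranchFrom_of_mem_merge (hσ : ∀ k, mrange (σ k) ⊆ mdom (σ (k + 1)))
    {b : ℕ → Trans St Λ Mk} (hb : IsInfBranch (merge σ ρ s) b) {k₀ : ℕ} (hk₀ : b k₀ ∈ σ k₀) :
    IsBranchFrom σ k₀ b := by
  have hmem : ∀ k, k₀ ≤ k → b k ∈ σ k := fun k hk => by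
    induction k, hk using Nat.le_induction with
    | base => exact hk₀
    | succ k _ ih => exact mem_left_of_mem_merge (hb (k + 1)).1 (hσ k ⟨b k, ih, (hb k).2⟩)
  exact fun k hk => ⟨hmem k hk, (hb k).2⟩

variable {A : AltAutomaton St Λ Mk} {u : ℕ → Λ}

lemma isRun_merge (hρ : A.IsRun u ρ)
    (hσ : ∀ k, σ k ⊆ A.delta ∧ IsMulti (σ k) (u k) ∧ mrange (σ k) ⊆ mdom (σ (k + 1))) :
    A.IsRun u (merge σ ρ A.init) := by
  have hrange : ∀ k, mrange (merge σ ρ A.init k) ⊆ mdom (σ (k + 1)) ∪ mdom (ρ (k + 1)) := by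
    rintro k s' ⟨t, ht, hs'⟩
    rcases merge_subset ht with h | h
    · exact Or.inl ((hσ k).2.2 ⟨t, h, hs'⟩)
    · exact Or.inr ((hρ.2 k).2.2 ▸ ⟨t, h, hs'⟩)
  refine ⟨mdom_mergeStep fun _ hs' => Or.inr (hρ.1 ▸ hs'), fun k => ⟨?_, ⟨?_, ?_⟩, ?_⟩⟩
  · exact merge_subset.trans (Set.union_subset (hσ k).1 (hρ.2 k).1)
  · exact fun t ht => (merge_subset ht).elim ((hσ k).2.1.1 t) ((hρ.2 k).2.1.1 t)
  · exact (injOn_src_union_merge (hσ k).2.1.2 (hρ.2 k).2.1.2).mono Set.subset_union_right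
  · exact (mdom_mergeStep (hrange k)).symm

lemma isAccRun_merge (hρ : A.IsAccRun u ρ) (hσ : A.IsAccSuffixRun u σ) :
    A.IsAccRun u (merge σ ρ A.init) := by
  refine ⟨isRun_merge hρ.1 hσ.1, fun b hb => ?_⟩
  by_cases hρb : ∀ k, b k ∈ ρ k
  · exact hρ.2 b fun k => ⟨hρb k, (hb k).2⟩
  · obtain ⟨k₀, hk₀⟩ := not_forall.mp hρb
    have hσb : b k₀ ∈ σ k₀ := (merge_subset (hb k₀).1).resolve_right hk₀
    exact hσ.2 k₀ b (hb.isBranchFrom_of_mem_merge (fun k => (hσ.1 k).2.2) hσb)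

end Merge

theorem synchronized_runs_general {St Λ Mk : Type} (A : AltAutomaton St Λ Mk)
    (w : ℕ → Λ) (i j : ℕ) (hij : i ≤ j)
    (hi : shift w i ∈ A.Lang) (hj : shift w j ∈ A.Lang) :
    ∃ σ τ : ℕ → Set (Trans St Λ Mk),
      A.IsAccRun (shift w i) σ ∧ A.IsAccRun (shift w j) τ ∧
      ∀ k, j ≤ k →
        ∀ t₁ ∈ σ (k - i) ∪ τ (k - j), ∀ t₂ ∈ σ (k - i) ∪ τ (k - j),
          t₁.src = t₂.src → t₁ = t₂ := by
  obtain ⟨-, σ, hσ⟩ := hi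
  obtain ⟨-, ρ, hρ⟩ := hj
  have hσ' := hσ.drop (j - i)
  rw [shift_shift, Nat.sub_add_cancel hij] at hσ'
  refine ⟨σ, merge _ ρ A.init, hσ, isAccRun_merge hρ hσ', fun k hk => ?_⟩
  rw [show k - i = k - j + (j - i) by omega]
  exact injOn_src_union_merge (σ := fun k => σ (k + (j - i))) (k := k - j) (hσ'.1 _).2.1.2 (hρ.1.2 _).2.1.2

/-- If both suffixes `w[i..]` and `w[j..]` (`i ≤ j`) of a word
`w` belong to the language of an SLAA `A`, then there exist accepting runs of
`A` over `w[i..]` and `w[j..]` that are synchronized: for every `k ≥ j`, the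
union of their multitransitions at absolute position `k` contains at most one
transition with each source state. -/
theorem synchronized_runs {St Λ Mk : Type} (A : AltAutomaton St Λ Mk)
    (hwf : A.WellFormed) (hslaa : A.IsSLAA)
    (w : ℕ → Λ) (i j : ℕ) (hij : i ≤ j)
    (hi : shift w i ∈ A.Lang) (hj : shift w j ∈ A.Lang) :
    ∃ σ τ : ℕ → Set (Trans St Λ Mk),
      A.IsAccRun (shift w i) σ ∧ A.IsAccRun (shift w j) τ ∧
      ∀ k, j ≤ k →
        ∀ t₁ ∈ σ (k - i) ∪ τ (k - j), ∀ t₂ ∈ σ (k - i) ∪ τ (k - j),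
          t₁.src = t₂.src → t₁ = t₂ :=
  synchronized_runs_general A w i j hij hi hj

end SLAA
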